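/- Let M be a stable matching of the marriage instance Ĝ_φ. If G_M contains no M-augmenting path, then the assignment A_M satisfies φ. Conversely, if A is a satisfying assignment of φ, then G_{M_A} contains no M_A-augmenting path. -/

import Mathlib

open scoped Classical

namespace PopMatch

/-- A marriage/roommates instance: a vertex set with a bipartition `A`/`B`
(ignored for roommates instances) and, for each vertex, a strict preference
list over its neighbors (most preferred first).  Adjacency is given by mutual
membership in the preference lists. -/
structure Inst (V : Type*) where
  A : Finset V
  B : Finset V
  plist : V → List V

namespace Inst

variable {V : Type*} [DecidableEq V] [Fintype V]

/-- `u` and `v` are adjacent. -/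
def adj (I : Inst V) (u v : V) : Prop := v ∈ I.plist u ∧ u ∈ I.plist v

/-- `u` (strictly) prefers `v` to `w`. -/
def pref (I : Inst V) (u v w : V) : Prop :=
  v ∈ I.plist u ∧ w ∈ I.plist u ∧ (I.plist u).idxOf v < (I.plist u).idxOf w

/-- Well-formedness of an instance as a marriage instance: preference lists are
duplicate-free and symmetric, and the graph is bipartite with parts `A`, `B`. -/
def IsValid (I : Inst V) : Prop :=
  (∀ v, (I.plist v).Nodup) ∧
  (∀ u v, v ∈ I.plist u ↔ u ∈ I.plist v) ∧
  Disjoint I.A I.B ∧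
  (∀ v : V, v ∈ I.A ∨ v ∈ I.B) ∧
  (∀ u v, v ∈ I.plist u → ((u ∈ I.A ∧ v ∈ I.B) ∨ (u ∈ I.B ∧ v ∈ I.A)))

/-- A matching, encoded by its partner function. -/
def IsMatching (I : Inst V) (p : V → Option V) : Prop :=
  (∀ u v, p u = some v → p v = some u) ∧ (∀ u v, p u = some v → I.adj u v)

/-- The number of matched vertices (twice the number of edges of the matching). -/
def msize (p : V → Option V) : ℕ := (Finset.univ.filter fun u => (p u).isSome).card

/-- Vertex `u` prefers matching `p` to matching `q`. -/
def PrefM (I : Inst V) (p q : V → Option V) (u : V) : Prop :=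
  match p u, q u with
  | some _, none => True
  | some v, some w => I.pref u v w
  | none, _ => False

/-- `phi p q` = number of vertices preferring `p` to `q`. -/
noncomputable def phi (I : Inst V) (p q : V → Option V) : ℕ :=
  (Finset.univ.filter fun u => I.PrefM p q u).card

/-- `delta p q = phi p q - phi q p`. -/
noncomputable def delta (I : Inst V) (p q : V → Option V) : ℤ :=
  (I.phi p q : ℤ) - (I.phi q p : ℤ)

/-- A popular matching: it never loses a head-to-head election. -/
def Popular (I : Inst V) (p : V → Option V) : Prop :=
  I.IsMatching p ∧ ∀ q, I.IsMatching q → 0 ≤ I.delta p q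

/-- A dominant matching: a popular matching that beats every larger matching. -/
def Dominant (I : Inst V) (p : V → Option V) : Prop :=
  I.Popular p ∧ ∀ q, I.IsMatching q → msize p < msize q → 0 < I.delta p q

/-- A maximum-size popular matching. -/
def MaxPopular (I : Inst V) (p : V → Option V) : Prop :=
  I.Popular p ∧ ∀ q, I.Popular q → msize q ≤ msize p

/-- A minimum-size popular matching. -/
def MinPopular (I : Inst V) (p : V → Option V) : Prop :=
  I.Popular p ∧ ∀ q, I.Popular q → msize p ≤ msize q

/-- `u` prefers `v` to its situation in the matching `p`
(an unmatched vertex prefers any neighbor to being unmatched). -/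
def PrefOver (I : Inst V) (p : V → Option V) (u v : V) : Prop :=
  match p u with
  | none => True
  | some w => I.pref u v w

/-- The edge `(u,v)` blocks the matching `p`. -/
def Blocks (I : Inst V) (p : V → Option V) (u v : V) : Prop :=
  I.adj u v ∧ p u ≠ some v ∧ I.PrefOver p u v ∧ I.PrefOver p v u

/-- A stable matching: a matching with no blocking edge. -/
def Stable (I : Inst V) (p : V → Option V) : Prop :=
  I.IsMatching p ∧ ∀ u v, ¬ I.Blocks p u v

/-- Adjacency in the subgraph `G_M` obtained by deleting the edges
labeled `(-,-)` with respect to the matching `p`. -/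
def GMAdj (I : Inst V) (p : V → Option V) (u v : V) : Prop :=
  I.adj u v ∧ (p u = some v ∨ I.PrefOver p u v ∨ I.PrefOver p v u)

/-- `f 0, f 1, …, f n` is an augmenting path with respect to the matching `p`
inside the subgraph `G_M`: an odd number `n` of edges, alternately outside and
inside `p`, with both endpoints unmatched. -/
def IsAugPath (I : Inst V) (p : V → Option V) (n : ℕ) (f : ℕ → V) : Prop :=
  n % 2 = 1 ∧
  (∀ i j, i ≤ n → j ≤ n → f i = f j → i = j) ∧
  (∀ i, i < n → I.GMAdj p (f i) (f (i + 1))) ∧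
  (∀ i, i < n → (p (f i) = some (f (i + 1)) ↔ i % 2 = 1)) ∧
  p (f 0) = none ∧ p (f n) = none

/-- `G_M` contains an augmenting path with respect to `p`. -/
def HasAugPath (I : Inst V) (p : V → Option V) : Prop := ∃ n f, I.IsAugPath p n f

/-- `u` prefers its situation in the matching `p` to `v`. -/
def PrefSit (I : Inst V) (p : V → Option V) (u v : V) : Prop :=
  match p u with
  | none => False
  | some w => I.pref u w v

/-- The weight `wt_p(u,v)` of an edge: `2` for a blocking edge, `-2` for a
`(-,-)` edge, `0` otherwise. -/
noncomputable def wtE (I : Inst V) (p : V → Option V) (u v : V) : ℤ :=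
  if I.PrefOver p u v ∧ I.PrefOver p v u then 2
  else if I.PrefSit p u v ∧ I.PrefSit p v u then -2 else 0

/-- The weight `wt_p(u,u)` of a self-loop. -/
def wtSelf (p : V → Option V) (u : V) : ℤ := if p u = none then 0 else -1

/-- A witness (dual certificate) for the popularity of the matching `p`. -/
def IsWitness (I : Inst V) (p : V → Option V) (α : V → ℤ) : Prop :=
  (∀ u, α u = 0 ∨ α u = 1 ∨ α u = -1) ∧
  (∑ u : V, α u) = 0 ∧
  (∀ u v, I.adj u v → I.wtE p u v ≤ α u + α v) ∧
  (∀ u : V, wtSelf p u ≤ α u)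

end Inst

end PopMatch

namespace PopMatch

/-- A 3SAT formula: `m` clauses over `n` variables, each clause a nonempty
list of at most three literals (a literal is a variable together with a
polarity, `true` meaning a positive occurrence). -/
structure Formula where
  n : ℕ
  m : ℕ
  clauses : Fin m → List (Fin n × Bool)
  nonempty : ∀ i, clauses i ≠ []
  three : ∀ i, (clauses i).length ≤ 3

namespace Formula

variable (F : Formula)

/-- The variables of the transformed formula `φ`: `X_1, …, X_{2n}`, where
`X_{n+i}` stands for `¬X_i`. -/
abbrev Var := Fin (2 * F.n)

/-- The transformed variable corresponding to a literal: `X_i ↦ X_i` and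
`¬X_i ↦ X_{n+i}`. -/
def tvar (l : Fin F.n × Bool) : F.Var :=
  if l.2 then ⟨l.1.val, by have := l.1.isLt; omega⟩
  else ⟨F.n + l.1.val, by have := l.1.isLt; omega⟩

/-- The variable `X_k` (for `k < n`). -/
def varFst (k : Fin F.n) : F.Var := ⟨k.val, by have := k.isLt; omega⟩

/-- The variable `X_{n+k}` (for `k < n`). -/
def varSnd (k : Fin F.n) : F.Var := ⟨F.n + k.val, by have := k.isLt; omega⟩

/-- The positive clauses of the transformed formula `φ`:
`C_1, …, C_m` are the original clauses with `¬X_i` replaced by `X_{n+i}`, and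
`C_{m+i} = X_i ∨ X_{n+i}` for `1 ≤ i ≤ n`. -/
def posClause (i : Fin (F.m + F.n)) : List F.Var :=
  if h : i.val < F.m then (F.clauses ⟨i.val, h⟩).map F.tvar
  else [⟨i.val - F.m, by have := i.isLt; omega⟩,
        ⟨F.n + (i.val - F.m), by have := i.isLt; omega⟩]

theorem posClause_length_le (i : Fin (F.m + F.n)) : (F.posClause i).length ≤ 3 := by
  unfold posClause
  split
  · simpa using F.three _
  · simp

theorem posClause_ne_nil (i : Fin (F.m + F.n)) : F.posClause i ≠ [] := by
  unfold posClause
  split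
  · simpa using F.nonempty _
  · simp

/-- An assignment satisfies the transformed formula `φ` if every positive
clause `C_i` contains a true variable and every negative clause
`D_{m+n+i} = ¬X_i ∨ ¬X_{n+i}` contains a false one. -/
def Sat (A : F.Var → Bool) : Prop :=
  (∀ i : Fin (F.m + F.n), ∃ x ∈ F.posClause i, A x = true) ∧
  (∀ k : Fin F.n, A (F.varFst k) = false ∨ A (F.varSnd k) = false)

/-- The index (among `1, …, n`) of the negative clause containing the unique
negated occurrence `¬x` of the variable `x`. -/
def negIdx (x : F.Var) : Fin F.n :=
  if h : x.val < F.n then ⟨x.val, h⟩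
  else ⟨x.val - F.n, by have := x.isLt; omega⟩

/-- An occurrence of a (positive) literal: a positive clause index together
with a position inside that clause. -/
def Occ := {q : Fin (F.m + F.n) × Fin 3 // q.2.val < (F.posClause q.1).length}

instance : DecidableEq F.Occ := by unfold Occ; infer_instance

instance : Fintype F.Occ := by unfold Occ; exact Subtype.fintype _

/-- The variable occurring at the occurrence `o`. -/
def litOf (o : F.Occ) : F.Var := (F.posClause o.1.1).get ⟨o.1.2.val, o.2⟩

/-- The list of all occurrences in the positive clause `i`, in clause order. -/
def occList (i : Fin (F.m + F.n)) : List F.Occ :=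
  (List.finRange (F.posClause i).length).map
    (fun j => ⟨(i, ⟨j.val, lt_of_lt_of_le j.isLt (F.posClause_length_le i)⟩), j.isLt⟩)

/-- The list of all occurrences of the variable `x`, in a fixed order. -/
def occsOfVar (x : F.Var) : List F.Occ :=
  ((List.finRange (F.m + F.n)).map (fun i => F.occList i)).flatten.filter
    (fun o => decide (F.litOf o = x))

end Formula

end PopMatch

namespace PopMatch

/-- The clauses of the transformed formula: positive ones (`.inl`) and the
negative clauses `D = ¬X_k ∨ ¬X_{n+k}` (`.inr k`). -/
abbrev CIdx (F : Formula) := Fin (F.m + F.n) ⊕ Fin F.n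

/-- The number of literals of a clause. -/
def clen (F : Formula) : CIdx F → ℕ
  | Sum.inl i => (F.posClause i).length
  | Sum.inr _ => 2

/-- Index of a `u`/`v` vertex of `Ĝ_φ`: a clause `ℓ` with `r` literals
together with a position `0 ≤ j ≤ r`. -/
abbrev UVIdx (F : Formula) := Σ ℓ : CIdx F, Fin (clen F ℓ + 1)

/-- The list of all clauses. -/
def allC (F : Formula) : List (CIdx F) :=
  ((List.finRange (F.m + F.n)).map Sum.inl) ++ ((List.finRange F.n).map Sum.inr)

/-- The occurrence given by position `jj` (0-based) of the positive
clause `i`. -/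
def mkOcc (F : Formula) (i : Fin (F.m + F.n)) (jj : ℕ)
    (h : jj < (F.posClause i).length) : F.Occ :=
  ⟨(i, ⟨jj, lt_of_lt_of_le h (F.posClause_length_le i)⟩), h⟩

/-- The vertices of the marriage instance `Ĝ_φ`. -/
inductive HGV (F : Formula) where
  | s : HGV F
  | t : HGV F
  | u : UVIdx F → HGV F
  | vv : UVIdx F → HGV F
  | pa : F.Occ → HGV F
  | pb : F.Occ → HGV F
  | pa' : F.Occ → HGV F
  | pb' : F.Occ → HGV F
  | nc : F.Var → HGV F
  | nd : F.Var → HGV F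
  | nc' : F.Var → HGV F
  | nd' : F.Var → HGV F
  deriving DecidableEq, Fintype

namespace HGV

/-- The preference lists of `Ĝ_φ`. -/
def plist (F : Formula) : HGV F → List (HGV F)
  | .s => (allC F).map (fun ℓ => .u ⟨ℓ, ⟨0, Nat.succ_pos _⟩⟩)
  | .t => (allC F).map (fun ℓ => .vv ⟨ℓ, ⟨clen F ℓ, Nat.lt_succ_self _⟩⟩)
  | .u ⟨Sum.inl i, j⟩ =>
      if h0 : j.val = 0 then [.vv ⟨Sum.inl i, j⟩, .s]
      else
        [.pb (mkOcc F i (j.val - 1)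
            (by have hj := j.isLt; simp only [clen] at hj; omega)),
         .vv ⟨Sum.inl i, j⟩]
  | .u ⟨Sum.inr k, j⟩ =>
      if j.val = 0 then [.vv ⟨Sum.inr k, j⟩, .s]
      else [.vv ⟨Sum.inr k, j⟩,
            .nd (if j.val = 1 then F.varFst k else F.varSnd k)]
  | .vv ⟨Sum.inl i, j⟩ =>
      if h0 : j.val = (F.posClause i).length then [.u ⟨Sum.inl i, j⟩, .t]
      else
        [.u ⟨Sum.inl i, j⟩,
         .pa (mkOcc F i j.val
            (by have hj := j.isLt; simp only [clen] at hj; omega))]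
  | .vv ⟨Sum.inr k, j⟩ =>
      if j.val = 2 then [.u ⟨Sum.inr k, j⟩, .t]
      else [.nc (if j.val = 0 then F.varFst k else F.varSnd k),
            .u ⟨Sum.inr k, j⟩]
  | .pa o =>
      [.pb o,
       .vv ⟨Sum.inl o.1.1, ⟨o.1.2.val, by
          have := o.2; simp only [clen]; omega⟩⟩,
       .pb' o]
  | .pa' o => [.pb' o, .pb o]
  | .pb o =>
      [.pa' o, .nc (F.litOf o), .pa o,
       .u ⟨Sum.inl o.1.1, ⟨o.1.2.val + 1, by
          have := o.2; simp only [clen]; omega⟩⟩]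
  | .pb' o => [.pa o, .pa' o]
  | .nc x =>
      .nd x :: (F.occsOfVar x).map HGV.pb ++
        [.nd' x,
         .vv ⟨Sum.inr (F.negIdx x), ⟨if x.val < F.n then 0 else 1, by
            have : clen F (Sum.inr (F.negIdx x)) = 2 := rfl
            rw [this]; split <;> omega⟩⟩]
  | .nc' x => [.nd' x, .nd x]
  | .nd x =>
      [.nc' x,
       .u ⟨Sum.inr (F.negIdx x), ⟨if x.val < F.n then 1 else 2, by
          have : clen F (Sum.inr (F.negIdx x)) = 2 := rfl
          rw [this]; split <;> omega⟩⟩,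
       .nc x]
  | .nd' x => [.nc x, .nc' x]

/-- The bipartition side of a vertex of `Ĝ_φ`. -/
def side {F : Formula} : HGV F → Bool
  | .t => true
  | .u _ => true
  | .pa _ => true
  | .pa' _ => true
  | .nc _ => true
  | .nc' _ => true
  | _ => false

end HGV

/-- The marriage instance `Ĝ_φ` associated with the transformed 3SAT
formula `φ`. -/
def Ghat (F : Formula) : Inst (HGV F) :=
  ⟨Finset.univ.filter (fun w => HGV.side w = true),
   Finset.univ.filter (fun w => HGV.side w = false),
   HGV.plist F⟩

variable {F : Formula}

/-- The gadget of the occurrence `o` is in **true state** in the matching `p`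
of `Ĝ_φ` (it contains the edges `(a_j, b_j)` and `(a'_j, b'_j)`). -/
def PosTrueH (p : HGV F → Option (HGV F)) (o : F.Occ) : Prop :=
  p (HGV.pa o) = some (HGV.pb o) ∧ p (HGV.pa' o) = some (HGV.pb' o)

/-- The gadget of the occurrence `o` is in **false state** in the matching `p`
of `Ĝ_φ` (it contains the edges `(a_j, b'_j)` and `(a'_j, b_j)`). -/
def PosFalseH (p : HGV F → Option (HGV F)) (o : F.Occ) : Prop :=
  p (HGV.pa o) = some (HGV.pb' o) ∧ p (HGV.pa' o) = some (HGV.pb o)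

/-- The gadget of `¬x` is in **true state** in the matching `p` of `Ĝ_φ`
(it contains the edges `(c_k, d'_k)` and `(c'_k, d_k)`). -/
def NegTrueH (p : HGV F → Option (HGV F)) (x : F.Var) : Prop :=
  p (HGV.nc x) = some (HGV.nd' x) ∧ p (HGV.nc' x) = some (HGV.nd x)

/-- The gadget of `¬x` is in **false state** in the matching `p` of `Ĝ_φ`
(it contains the edges `(c_k, d_k)` and `(c'_k, d'_k)`). -/
def NegFalseH (p : HGV F → Option (HGV F)) (x : F.Var) : Prop :=
  p (HGV.nc x) = some (HGV.nd x) ∧ p (HGV.nc' x) = some (HGV.nd' x)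

end PopMatch

namespace PopMatch

variable {F : Formula}

/-- The assignment associated with a stable matching `M` of `Ĝ_φ`:
`x = true` if the gadget of `¬x` is in false state in `M`, and `x = false`
otherwise. -/
noncomputable def asgnOfH (p : HGV F → Option (HGV F)) : F.Var → Bool :=
  fun x => if NegFalseH p x then true else false

/-- The matching `M_A` of `Ĝ_φ` associated with an assignment `A`: all edges
`(u^ℓ_i, v^ℓ_i)` together with, for every variable `x`, the true-state pairs
of the gadgets of `x` and the false-state pair of the gadget of `¬x` if
`A x = true`, and the false-state pairs of the gadgets of `x` and the
true-state pair of the gadget of `¬x` otherwise. -/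
def MAH (F : Formula) (A : F.Var → Bool) : HGV F → Option (HGV F)
  | HGV.s => none
  | HGV.t => none
  | HGV.u q => some (HGV.vv q)
  | HGV.vv q => some (HGV.u q)
  | HGV.pa o => if A (F.litOf o) then some (HGV.pb o) else some (HGV.pb' o)
  | HGV.pb o => if A (F.litOf o) then some (HGV.pa o) else some (HGV.pa' o)
  | HGV.pa' o => if A (F.litOf o) then some (HGV.pb' o) else some (HGV.pb o)
  | HGV.pb' o => if A (F.litOf o) then some (HGV.pa' o) else some (HGV.pa o)
  | HGV.nc x => if A x then some (HGV.nd x) else some (HGV.nd' x)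
  | HGV.nd x => if A x then some (HGV.nc x) else some (HGV.nc' x)
  | HGV.nc' x => if A x then some (HGV.nd' x) else some (HGV.nd x)
  | HGV.nd' x => if A x then some (HGV.nc' x) else some (HGV.nc x)

end PopMatch

/-!
In a stable matching `M` of `Ĝ_φ` every gadget is in its true or its false state, `s` and `t` are
unmatched and every `u^ℓ_j` is matched to `v^ℓ_j`; moreover the gadget of `¬x` in true state
forces every gadget of `x` into false state. So if `A_M` falsifies a clause, all gadgets met by
the path `s, u_0, v_0, …, u_r, v_r, t` of that clause are in false state, and threading the path
through them gives an augmenting path in `G_M`.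

Conversely, for a satisfying assignment `A` the matched vertices of `M_A` contain a set that
covers every edge of `G_{M_A}` outside `M_A` and meets every edge of `M_A` in one endpoint only.
Walking along an augmenting path, such a cover would have to contain its unmatched last vertex.
-/

namespace PopMatch

namespace Inst

variable {V : Type*} {I : Inst V} {p : V → Option V} {u v w : V}

lemma IsMatching.symm (hp : I.IsMatching p) (h : p u = some v) : p v = some u := hp.1 u v h

lemma IsMatching.mem_plist (hp : I.IsMatching p) (h : p u = some v) : v ∈ I.plist u :=
  (hp.2 u v h).1

lemma IsMatching.eq_of_eq_some (hp : I.IsMatching p) (hu : p u = some w) (hv : p v = some w) :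
    u = v :=
  Option.some_inj.1 ((hp.symm hu).symm.trans (hp.symm hv))

lemma adj_comm : I.adj u v ↔ I.adj v u := and_comm

variable [DecidableEq V]

lemma prefOver_of_eq_none (h : p u = none) : I.PrefOver p u v := by
  simp [PrefOver, h]

lemma prefOver_iff_of_eq_some (h : p u = some w) : I.PrefOver p u v ↔ I.pref u v w := by
  simp [PrefOver, h]

lemma pref_of_plist_eq_cons {l : List V} (hl : I.plist u = v :: l) (hw : w ∈ l) (hne : w ≠ v) :
    I.pref u v w := by
  simp [pref, hl, hw, Ne.symm hne]

lemma pref_of_plist_eq_append {l₁ l₂ : List V} (hl : I.plist u = l₁ ++ l₂) (hv : v ∈ l₁)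
    (hw : w ∈ l₂) (hw₁ : w ∉ l₁) : I.pref u v w := by
  refine ⟨by simp [hl, hv], by simp [hl, hw], ?_⟩
  rw [hl, List.idxOf_append_of_mem hv, List.idxOf_append_of_notMem hw₁]
  exact (List.idxOf_lt_length_iff.2 hv).trans_le (Nat.le_add_right _ _)

lemma mem_of_pref_of_plist_eq_append {l₁ l₂ : List V} (hl : I.plist u = l₁ ++ w :: l₂)
    (hw : w ∉ l₁) (h : I.pref u v w) : v ∈ l₁ := by
  obtain ⟨-, -, hlt⟩ := h
  rw [hl, List.idxOf_append_of_notMem hw, List.idxOf_cons_self] at hlt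
  by_contra hv
  rw [List.idxOf_append_of_notMem hv] at hlt
  omega

lemma eq_of_pref_of_plist_eq_pair {x : V} (hl : I.plist u = [x, w]) (hne : w ≠ x)
    (h : I.pref u v w) : v = x :=
  List.mem_singleton.1 (mem_of_pref_of_plist_eq_append (l₁ := [x]) hl (by simpa using hne) h)

lemma not_pref_of_plist_eq_cons {l : List V} (hl : I.plist u = w :: l) : ¬ I.pref u v w := by
  simp [pref, hl]

lemma not_prefOver_of_plist_eq_cons {l : List V} (hl : I.plist u = w :: l) (h : p u = some w) :
    ¬ I.PrefOver p u v := by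
  rw [prefOver_iff_of_eq_some h]
  exact not_pref_of_plist_eq_cons hl

lemma IsMatching.prefOver_of_plist_eq_cons (hp : I.IsMatching p) {l : List V}
    (hl : I.plist u = w :: l) (hw : p u ≠ some w) : I.PrefOver p u w := by
  cases h : p u with
  | none => exact prefOver_of_eq_none h
  | some z =>
    have hz := hp.mem_plist h
    rw [hl, List.mem_cons] at hz
    rcases hz with rfl | hz
    · exact absurd h hw
    · exact (prefOver_iff_of_eq_some h).2 (pref_of_plist_eq_cons hl hz (by rintro rfl; exact hw h))

lemma IsMatching.gmAdj_comm (hp : I.IsMatching p) : I.GMAdj p u v ↔ I.GMAdj p v u := by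
  have hsymm : p u = some v ↔ p v = some u := ⟨hp.symm, hp.symm⟩
  simp only [GMAdj, adj_comm (u := u), hsymm]
  tauto

lemma not_gmAdj_of_plist_eq_cons {u' v' : V} {l l' : List V} (hu : p u = some u')
    (hlu : I.plist u = u' :: l) (hv : p v = some v') (hlv : I.plist v = v' :: l') (hne : u' ≠ v) :
    ¬ I.GMAdj p u v := by
  rintro ⟨-, h | h | h⟩
  · exact hne (Option.some_inj.1 (hu.symm.trans h))
  · exact not_prefOver_of_plist_eq_cons hlu hu h
  · exact not_prefOver_of_plist_eq_cons hlv hv h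

lemma Stable.not_prefOver (hM : I.Stable p) (hadj : I.adj u v) (hne : p u ≠ some v)
    (h : I.PrefOver p u v) : ¬ I.PrefOver p v u :=
  fun h' => hM.2 u v ⟨hadj, hne, h, h'⟩

lemma pref_or_pref_of_ne {z : V} (hz : z ∈ I.plist u) (hv : v ∈ I.plist u) (hne : z ≠ v) :
    I.pref u z v ∨ I.pref u v z := by
  have := (List.idxOf_inj hz).not.2 hne
  rcases Nat.lt_or_gt_of_ne this with h | h
  · exact Or.inl ⟨hz, hv, h⟩
  · exact Or.inr ⟨hv, hz, h⟩

lemma Stable.exists_pref_partner (hM : I.Stable p) (hadj : I.adj u v) (hne : p u ≠ some v)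
    (h : I.PrefOver p u v) : ∃ z, p v = some z ∧ I.pref v z u := by
  have hv := hM.not_prefOver hadj hne h
  cases hz : p v with
  | none => exact absurd (prefOver_of_eq_none hz) hv
  | some z =>
    rw [prefOver_iff_of_eq_some hz] at hv
    have hzu : z ≠ u := by rintro rfl; exact hne (hM.1.symm hz)
    exact ⟨z, rfl, (pref_or_pref_of_ne (hM.1.mem_plist hz) hadj.2 hzu).resolve_right hv⟩

lemma Stable.eq_some_or_exists_pref_of_plist_eq_cons (hM : I.Stable p) {l : List V}
    (hl : I.plist u = v :: l) (hu : u ∈ I.plist v) :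
    p u = some v ∨ ∃ z, p v = some z ∧ I.pref v z u := by
  by_cases h : p u = some v
  · exact Or.inl h
  · exact Or.inr
      (hM.exists_pref_partner ⟨by simp [hl], hu⟩ h (hM.1.prefOver_of_plist_eq_cons hl h))

/-- Walking along an augmenting path, the cover has to contain every second vertex, from the
second one up to the last one, which is unmatched. -/
theorem not_hasAugPath_of_cover (C : Set V) (hC : ∀ v ∈ C, p v ≠ none)
    (hCmatch : ∀ u v, p u = some v → u ∈ C → v ∉ C)
    (hCcover : ∀ u v, I.GMAdj p u v → p u ≠ some v → u ∈ C ∨ v ∈ C) :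
    ¬ I.HasAugPath p := by
  rintro ⟨n, f, hodd, -, hadj, halt, h0, hn⟩
  have hcover : ∀ i, i < n → i % 2 = 0 → f i ∈ C ∨ f (i + 1) ∈ C := fun i hi he =>
    hCcover _ _ (hadj i hi) (fun h => by have := (halt i hi).1 h; omega)
  have hodd_mem : ∀ j, 2 * j + 1 ≤ n → f (2 * j + 1) ∈ C := by
    intro j
    induction j with
    | zero => exact fun hj => (hcover 0 (by omega) rfl).resolve_left (fun h => hC _ h h0)
    | succ j ih =>
      intro hj
      have hmatch : p (f (2 * j + 1)) = some (f (2 * j + 2)) := (halt _ (by omega)).2 (by omega)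
      exact (hcover (2 * j + 2) (by omega) (by omega)).resolve_left
        (hCmatch _ _ hmatch (ih (by omega)))
  exact hC _ (by simpa [show 2 * (n / 2) + 1 = n by omega] using hodd_mem (n / 2) (by omega)) hn

def RankedLink (I : Inst V) (p : V → Option V) (rank : V → ℕ) (q q' : V × V) : Prop :=
  I.GMAdj p q.2 q'.1 ∧ rank q.2 < rank q'.1

/-- The increasing `rank` rules out repeated vertices. -/
theorem isAugPath_of_rank_lt (hp : I.IsMatching p) (rank : V → ℕ) {n : ℕ} {f : ℕ → V}
    (hn : n % 2 = 1) (h0 : p (f 0) = none) (hfn : p (f n) = none)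
    (hstep : ∀ i < n, I.GMAdj p (f i) (f (i + 1)) ∧ rank (f i) < rank (f (i + 1)))
    (hmatched : ∀ i < n, i % 2 = 1 → p (f i) = some (f (i + 1))) : I.IsAugPath p n f := by
  have hinj : ∀ i j, i ≤ n → j ≤ n → f i = f j → i = j := fun i j hi hj hij =>
    (strictMonoOn_Iic_of_lt_succ (ψ := rank ∘ f) fun i hi => by
      simpa [Order.succ_eq_add_one] using (hstep i hi).2).injOn hi hj (congrArg rank hij)
  refine ⟨hn, hinj, fun i hi => (hstep i hi).1, fun i hi => ⟨fun h => ?_, hmatched i hi⟩,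
    h0, hfn⟩
  by_contra hodd
  rcases Nat.eq_zero_or_pos i with rfl | hpos
  · rw [h0] at h
    cases h
  · have hprev := hp.symm (hmatched (i - 1) (by omega) (by omega))
    rw [show i - 1 + 1 = i by omega, h, Option.some_inj] at hprev
    exact absurd (hinj _ _ (by omega) (by omega) hprev) (by omega)

/-- The matching edges `ps`, joined by edges of `G_M` from `a` to `b`, read as a walk
`a, ps₀.1, ps₀.2, ps₁.1, …, b`. -/
theorem hasAugPath_of_isChain (hp : I.IsMatching p) (rank : V → ℕ) {a b : V}
    (ha : p a = none) (hb : p b = none) (ps : List (V × V))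
    (hps : ∀ q ∈ ps, p q.1 = some q.2 ∧ rank q.1 < rank q.2)
    (hchain : ((a, a) :: ps ++ [(b, b)]).IsChain (I.RankedLink p rank)) :
    I.HasAugPath p := by
  set Q := (a, a) :: ps ++ [(b, b)] with hQ
  have hlen : Q.length = ps.length + 2 := by simp [hQ]
  have hQps : ∀ j < ps.length, Q.getD (j + 1) (a, a) ∈ ps := by
    intro j hj
    simp [hQ, List.getD_eq_getElem?_getD, List.getElem?_append_left hj,
      List.getElem?_eq_getElem hj, List.getElem_mem]
  have hQchain : ∀ j ≤ ps.length,
      I.RankedLink p rank (Q.getD j (a, a)) (Q.getD (j + 1) (a, a)) := by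
    intro j hj
    simpa [List.getD_eq_getElem?_getD, List.getElem?_eq_getElem (show j < Q.length by omega),
      List.getElem?_eq_getElem (show j + 1 < Q.length by omega)] using
      List.isChain_iff_getElem.1 hchain j (by omega)
  let f : ℕ → V := fun i =>
    if i % 2 = 0 then (Q.getD (i / 2) (a, a)).2 else (Q.getD (i / 2 + 1) (a, a)).1
  have hmatched : ∀ i < 2 * ps.length + 1, i % 2 = 1 →
      p (f i) = some (f (i + 1)) ∧ rank (f i) < rank (f (i + 1)) := fun i hi hodd => by
    simpa [f, hodd, show (i + 1) % 2 = 0 by omega, show (i + 1) / 2 = i / 2 + 1 by omega] using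
      hps _ (hQps (i / 2) (by omega))
  have hfn : f (2 * ps.length + 1) = b := by
    simp [f, hQ, List.getD_eq_getElem?_getD, show (2 * ps.length + 1) / 2 = ps.length by omega]
  refine ⟨_, f, isAugPath_of_rank_lt hp rank (by omega) ha (by rwa [hfn]) (fun i hi => ?_)
    (fun i hi hodd => (hmatched i hi hodd).1)⟩
  rcases Nat.mod_two_eq_zero_or_one i with he | ho
  · simpa [RankedLink, f, he, show (i + 1) % 2 = 1 by omega, show (i + 1) / 2 = i / 2 by omega]
      using hQchain (i / 2) (by omega)
  · obtain ⟨hm, hr⟩ := hmatched i hi ho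
    exact ⟨⟨hp.2 _ _ hm, Or.inl hm⟩, hr⟩

end Inst

variable {F : Formula}

/-- `v^ℓ_{j-1}`, the clause-chain neighbour of `a_j` for the occurrence `o` (the `j`-th literal
of `ℓ`; positions are `0`-based in `o`, so this is `v^ℓ_{o.1.2}`). -/
def vBefore (o : F.Occ) : HGV F :=
  .vv ⟨Sum.inl o.1.1, ⟨o.1.2.val, by have := o.2; simp only [clen]; omega⟩⟩

/-- `u^ℓ_j`, the clause-chain neighbour of `b_j`. -/
def uAfter (o : F.Occ) : HGV F :=
  .u ⟨Sum.inl o.1.1, ⟨o.1.2.val + 1, by have := o.2; simp only [clen]; omega⟩⟩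

/-- `v^{ℓ'}_{k-1}`, the clause-chain neighbour of `c_k` in the negative clause of `¬x`. -/
def vBeforeNeg (x : F.Var) : HGV F :=
  .vv ⟨Sum.inr (F.negIdx x), ⟨if x.val < F.n then 0 else 1, by
    have : clen F (Sum.inr (F.negIdx x)) = 2 := rfl
    rw [this]; split <;> omega⟩⟩

/-- `u^{ℓ'}_k`, the clause-chain neighbour of `d_k`. -/
def uAfterNeg (x : F.Var) : HGV F :=
  .u ⟨Sum.inr (F.negIdx x), ⟨if x.val < F.n then 1 else 2, by
    have : clen F (Sum.inr (F.negIdx x)) = 2 := rfl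
    rw [this]; split <;> omega⟩⟩

section PreferenceLists

variable (o : F.Occ) (x : F.Var) (i : Fin (F.m + F.n)) (k : Fin F.n)

@[simp] lemma plist_pa : (Ghat F).plist (.pa o) = [.pb o, vBefore o, .pb' o] := rfl

@[simp] lemma plist_pa' : (Ghat F).plist (.pa' o) = [.pb' o, .pb o] := rfl

@[simp] lemma plist_pb :
    (Ghat F).plist (.pb o) = [.pa' o, .nc (F.litOf o), .pa o, uAfter o] := rfl

@[simp] lemma plist_pb' : (Ghat F).plist (.pb' o) = [.pa o, .pa' o] := rfl

@[simp] lemma plist_nc :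
    (Ghat F).plist (.nc x) = .nd x :: (F.occsOfVar x).map .pb ++ [.nd' x, vBeforeNeg x] := rfl

@[simp] lemma plist_nc' : (Ghat F).plist (.nc' x) = [.nd' x, .nd x] := rfl

@[simp] lemma plist_nd : (Ghat F).plist (.nd x) = [.nc' x, uAfterNeg x, .nc x] := rfl

@[simp] lemma plist_nd' : (Ghat F).plist (.nd' x) = [.nc x, .nc' x] := rfl

@[simp] lemma plist_s :
    (Ghat F).plist .s = (allC F).map fun ℓ => .u ⟨ℓ, ⟨0, Nat.succ_pos _⟩⟩ := rfl

@[simp] lemma plist_t :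
    (Ghat F).plist .t =
      (allC F).map fun ℓ => .vv ⟨ℓ, ⟨clen F ℓ, Nat.lt_succ_self _⟩⟩ := rfl

variable {i k}

lemma plist_u_inl_zero {j : Fin (clen F (Sum.inl i) + 1)} (hj : j.val = 0) :
    (Ghat F).plist (.u ⟨Sum.inl i, j⟩) = [.vv ⟨Sum.inl i, j⟩, .s] := by
  simp [Ghat, HGV.plist, hj]

lemma plist_u_inl_pos {j : Fin (clen F (Sum.inl i) + 1)} (hj : j.val ≠ 0) :
    (Ghat F).plist (.u ⟨Sum.inl i, j⟩) =
      [.pb (mkOcc F i (j.val - 1) (by have := j.isLt; simp only [clen] at this; omega)),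
       .vv ⟨Sum.inl i, j⟩] := by
  simp [Ghat, HGV.plist, hj]

lemma plist_u_inr_zero {j : Fin (clen F (Sum.inr k) + 1)} (hj : j.val = 0) :
    (Ghat F).plist (.u ⟨Sum.inr k, j⟩) = [.vv ⟨Sum.inr k, j⟩, .s] := by
  simp [Ghat, HGV.plist, hj]

lemma plist_u_inr_pos {j : Fin (clen F (Sum.inr k) + 1)} (hj : j.val ≠ 0) :
    (Ghat F).plist (.u ⟨Sum.inr k, j⟩) =
      [.vv ⟨Sum.inr k, j⟩, .nd (if j.val = 1 then F.varFst k else F.varSnd k)] := by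
  simp [Ghat, HGV.plist, hj]

lemma plist_vv_inl_last {j : Fin (clen F (Sum.inl i) + 1)} (hj : j.val = (F.posClause i).length) :
    (Ghat F).plist (.vv ⟨Sum.inl i, j⟩) = [.u ⟨Sum.inl i, j⟩, .t] := by
  simp [Ghat, HGV.plist, hj]

lemma plist_vv_inl_mid {j : Fin (clen F (Sum.inl i) + 1)} (hj : j.val ≠ (F.posClause i).length) :
    (Ghat F).plist (.vv ⟨Sum.inl i, j⟩) =
      [.u ⟨Sum.inl i, j⟩,
       .pa (mkOcc F i j.val (by have := j.isLt; simp only [clen] at this; omega))] := by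
  simp [Ghat, HGV.plist, hj]

lemma plist_vv_inr_last {j : Fin (clen F (Sum.inr k) + 1)} (hj : j.val = 2) :
    (Ghat F).plist (.vv ⟨Sum.inr k, j⟩) = [.u ⟨Sum.inr k, j⟩, .t] := by
  simp [Ghat, HGV.plist, hj]

lemma plist_vv_inr_mid {j : Fin (clen F (Sum.inr k) + 1)} (hj : j.val ≠ 2) :
    (Ghat F).plist (.vv ⟨Sum.inr k, j⟩) =
      [.nc (if j.val = 0 then F.varFst k else F.varSnd k), .u ⟨Sum.inr k, j⟩] := by
  simp [Ghat, HGV.plist, hj]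

end PreferenceLists

lemma mem_allC (ℓ : CIdx F) : ℓ ∈ allC F := by
  rcases ℓ with i | k <;> simp [allC]

lemma mem_occsOfVar (o : F.Occ) : o ∈ F.occsOfVar (F.litOf o) := by
  simp only [Formula.occsOfVar, List.mem_filter, List.mem_flatten, List.mem_map,
    List.mem_finRange, true_and, decide_true, and_true]
  refine ⟨_, ⟨o.1.1, rfl⟩, ?_⟩
  exact List.mem_map.2 ⟨⟨o.1.2.val, o.2⟩, List.mem_finRange _, rfl⟩

lemma adj_u_vv (ℓ : CIdx F) (j : Fin (clen F ℓ + 1)) :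
    (Ghat F).adj (.u ⟨ℓ, j⟩) (.vv ⟨ℓ, j⟩) := by
  constructor
  · rcases ℓ with i | k <;> by_cases hj : j.val = 0
    · simp [plist_u_inl_zero hj]
    · simp [plist_u_inl_pos hj]
    · simp [plist_u_inr_zero hj]
    · simp [plist_u_inr_pos hj]
  · rcases ℓ with i | k
    · by_cases hj : j.val = (F.posClause i).length
      · simp [plist_vv_inl_last hj]
      · simp [plist_vv_inl_mid hj]
    · by_cases hj : j.val = 2
      · simp [plist_vv_inr_last hj]
      · simp [plist_vv_inr_mid hj]

lemma adj_vv_t (ℓ : CIdx F) :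
    (Ghat F).adj (.vv ⟨ℓ, ⟨clen F ℓ, Nat.lt_succ_self _⟩⟩) .t := by
  refine ⟨?_, by rw [plist_t]; exact List.mem_map_of_mem (mem_allC ℓ)⟩
  rcases ℓ with i | k
  · rw [plist_vv_inl_last rfl]; simp
  · rw [plist_vv_inr_last rfl]; simp

lemma adj_s_u (ℓ : CIdx F) : (Ghat F).adj .s (.u ⟨ℓ, ⟨0, Nat.succ_pos _⟩⟩) := by
  refine ⟨by rw [plist_s]; exact List.mem_map_of_mem (mem_allC ℓ), ?_⟩
  rcases ℓ with i | k
  · rw [plist_u_inl_zero rfl]; simp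
  · rw [plist_u_inr_zero rfl]; simp

@[simp] lemma mkOcc_snd_val (i : Fin (F.m + F.n)) (j : ℕ) (h : j < (F.posClause i).length) :
    ((mkOcc F i j h).1.2).val = j := rfl

lemma posClause_length_pos (i : Fin (F.m + F.n)) : 0 < (F.posClause i).length :=
  List.length_pos_iff.2 (F.posClause_ne_nil i)

lemma varFst_negIdx {x : F.Var} (hx : x.val < F.n) : F.varFst (F.negIdx x) = x := by
  simp [Formula.negIdx, Formula.varFst, hx]

lemma varSnd_negIdx {x : F.Var} (hx : ¬ x.val < F.n) : F.varSnd (F.negIdx x) = x := by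
  have := x.isLt
  ext
  simp [Formula.negIdx, Formula.varSnd, hx]
  omega

lemma uAfterNeg_of_lt {x : F.Var} (hx : x.val < F.n) :
    uAfterNeg x = .u ⟨Sum.inr (F.negIdx x), ⟨1, by simp [clen]⟩⟩ := by
  simp [uAfterNeg, hx]

lemma uAfterNeg_of_not_lt {x : F.Var} (hx : ¬ x.val < F.n) :
    uAfterNeg x = .u ⟨Sum.inr (F.negIdx x), ⟨2, by simp [clen]⟩⟩ := by
  simp [uAfterNeg, hx]

lemma plist_vBefore (o : F.Occ) : (Ghat F).plist (vBefore o) =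
    [.u ⟨Sum.inl o.1.1, ⟨o.1.2.val, by have := o.2; simp only [clen]; omega⟩⟩, .pa o] :=
  plist_vv_inl_mid (by simpa [clen] using o.2.ne)

lemma plist_uAfter (o : F.Occ) : (Ghat F).plist (uAfter o) =
    [.pb o,
      .vv ⟨Sum.inl o.1.1, ⟨o.1.2.val + 1, by have := o.2; simp only [clen]; omega⟩⟩] :=
  plist_u_inl_pos (by simp)

lemma plist_vBeforeNeg (x : F.Var) : (Ghat F).plist (vBeforeNeg x) =
    [.nc x, .u ⟨Sum.inr (F.negIdx x), ⟨if x.val < F.n then 0 else 1, by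
      have : clen F (Sum.inr (F.negIdx x)) = 2 := rfl
      rw [this]; split <;> omega⟩⟩] := by
  rw [vBeforeNeg, plist_vv_inr_mid (by split <;> simp)]
  by_cases hx : x.val < F.n <;> simp [hx, varFst_negIdx, varSnd_negIdx]

lemma plist_uAfterNeg (x : F.Var) : (Ghat F).plist (uAfterNeg x) =
    [.vv ⟨Sum.inr (F.negIdx x), ⟨if x.val < F.n then 1 else 2, by
      have : clen F (Sum.inr (F.negIdx x)) = 2 := rfl
      rw [this]; split <;> omega⟩⟩, .nd x] := by
  rw [uAfterNeg, plist_u_inr_pos (by split <;> simp)]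
  by_cases hx : x.val < F.n <;> simp [hx, varFst_negIdx, varSnd_negIdx]

lemma negIdx_varFst (k : Fin F.n) : F.negIdx (F.varFst k) = k := by
  simp [Formula.negIdx, Formula.varFst]

lemma negIdx_varSnd (k : Fin F.n) : F.negIdx (F.varSnd k) = k := by
  simp [Formula.negIdx, Formula.varSnd]

lemma vBeforeNeg_varFst (k : Fin F.n) :
    vBeforeNeg (F.varFst k) = .vv ⟨Sum.inr k, ⟨0, by simp [clen]⟩⟩ := by
  unfold vBeforeNeg
  congr 2
  · rw [negIdx_varFst]
  · ext; simp [Formula.varFst]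

lemma uAfterNeg_varFst (k : Fin F.n) :
    uAfterNeg (F.varFst k) = .u ⟨Sum.inr k, ⟨1, by simp [clen]⟩⟩ := by
  unfold uAfterNeg
  congr 2
  · rw [negIdx_varFst]
  · ext; simp [Formula.varFst]

lemma vBeforeNeg_varSnd (k : Fin F.n) :
    vBeforeNeg (F.varSnd k) = .vv ⟨Sum.inr k, ⟨1, by simp [clen]⟩⟩ := by
  unfold vBeforeNeg
  congr 2
  · rw [negIdx_varSnd]
  · ext; simp [Formula.varSnd]

lemma uAfterNeg_varSnd (k : Fin F.n) :
    uAfterNeg (F.varSnd k) = .u ⟨Sum.inr k, ⟨2, by simp [clen]⟩⟩ := by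
  unfold uAfterNeg
  congr 2
  · rw [negIdx_varSnd]
  · ext; simp [Formula.varSnd]

lemma side_ne_of_mem_plist {u v : HGV F} (h : v ∈ (Ghat F).plist u) : v.side ≠ u.side := by
  cases u with
  | s | t =>
    simp only [plist_s, plist_t, List.mem_map] at h
    obtain ⟨ℓ, -, rfl⟩ := h
    simp [HGV.side]
  | u q =>
    obtain ⟨ℓ | ℓ, j⟩ := q <;> by_cases hj : j.val = 0
    all_goals first
      | rw [plist_u_inl_zero hj] at h | rw [plist_u_inl_pos hj] at h
      | rw [plist_u_inr_zero hj] at h | rw [plist_u_inr_pos hj] at h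
    all_goals simp only [List.mem_cons, List.not_mem_nil, or_false] at h
    all_goals rcases h with rfl | rfl <;> simp [HGV.side]
  | vv q =>
    obtain ⟨ℓ | ℓ, j⟩ := q
    · by_cases hj : j.val = (F.posClause ℓ).length
      all_goals first | rw [plist_vv_inl_last hj] at h | rw [plist_vv_inl_mid hj] at h
      all_goals simp only [List.mem_cons, List.not_mem_nil, or_false] at h
      all_goals rcases h with rfl | rfl <;> simp [HGV.side]
    · by_cases hj : j.val = 2
      all_goals first | rw [plist_vv_inr_last hj] at h | rw [plist_vv_inr_mid hj] at h
      all_goals simp only [List.mem_cons, List.not_mem_nil, or_false] at h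
      all_goals rcases h with rfl | rfl <;> simp [HGV.side]
  | nc x =>
    simp only [plist_nc, List.mem_cons, List.mem_append, List.mem_map, List.not_mem_nil,
      or_false] at h
    rcases h with (rfl | ⟨o, -, rfl⟩) | rfl | rfl <;> simp [HGV.side, vBeforeNeg]
  | _ =>
    simp only [plist_pa, plist_pa', plist_pb, plist_pb', plist_nc', plist_nd, plist_nd',
      List.mem_cons, List.not_mem_nil, or_false] at h
    rcases h with rfl | rfl | rfl | rfl <;> simp [HGV.side, vBefore, uAfter, uAfterNeg]

namespace Inst.Stable

variable {M : HGV F → Option (HGV F)}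

lemma pb'_partner (hM : (Ghat F).Stable M) (o : F.Occ) :
    M (.pb' o) = some (.pa o) ∨ M (.pb' o) = some (.pa' o) := by
  rcases hM.eq_some_or_exists_pref_of_plist_eq_cons (plist_pa' o) (by simp) with h | ⟨z, hz, h⟩
  · exact Or.inr (hM.1.symm h)
  · rw [eq_of_pref_of_plist_eq_pair (plist_pb' o) (by simp) h] at hz
    exact Or.inl hz

lemma pb_partner (hM : (Ghat F).Stable M) (o : F.Occ) :
    M (.pb o) = some (.pa o) ∨ M (.pb o) = some (.pa' o) ∨
      M (.pb o) = some (.nc (F.litOf o)) := by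
  rcases hM.pb'_partner o with hb' | hb'
  · -- `a'`, the first choice of `b`, could only prefer `b'`, which holds `a`
    rcases hM.eq_some_or_exists_pref_of_plist_eq_cons (plist_pb o) (by simp) with h | ⟨z, hz, h⟩
    · exact Or.inr (Or.inl h)
    · rw [eq_of_pref_of_plist_eq_pair (plist_pa' o) (by simp) h] at hz
      rw [hM.1.symm hz] at hb'
      cases hb'
  · obtain ⟨z, hz, h⟩ := hM.exists_pref_partner (u := .pb' o) (v := .pa o) (by simp [Inst.adj])
      (by simp [hb']) ((prefOver_iff_of_eq_some hb').2
        (pref_of_plist_eq_cons (plist_pb' o) (by simp) (by simp)))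
    have hz' := mem_of_pref_of_plist_eq_append (l₁ := [.pb o, vBefore o]) (plist_pa o)
      (by simp [vBefore]) h
    simp only [List.mem_cons, List.not_mem_nil, or_false] at hz'
    rcases hz' with rfl | rfl
    · exact Or.inl (hM.1.symm hz)
    · -- `a` settles for `v`, so `b` must hold a partner it prefers to `a`
      obtain ⟨w, hw, h⟩ := hM.exists_pref_partner (u := .pa o) (v := .pb o) (by simp [Inst.adj])
        (by simp [hz, vBefore]) ((prefOver_iff_of_eq_some hz).2
          (pref_of_plist_eq_cons (plist_pa o) (by simp) (by simp [vBefore])))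
      have hw' := mem_of_pref_of_plist_eq_append (l₁ := [.pa' o, .nc (F.litOf o)]) (plist_pb o)
        (by simp) h
      simp only [List.mem_cons, List.not_mem_nil, or_false] at hw'
      rcases hw' with rfl | rfl <;> simp [hw]

lemma u_ne_pb (hM : (Ghat F).Stable M) (q : UVIdx F) (o : F.Occ) : M (.u q) ≠ some (.pb o) :=
  fun h => by rcases hM.pb_partner o with h' | h' | h' <;> rw [hM.1.symm h] at h' <;> cases h'

lemma t_eq_none (hM : (Ghat F).Stable M) : M .t = none := by
  cases ht : M .t with
  | none => rfl
  | some w =>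
    exfalso
    have hw := hM.1.mem_plist ht
    rw [plist_t, List.mem_map] at hw
    obtain ⟨ℓ, -, rfl⟩ := hw
    have hv := hM.1.symm ht
    have hl : (Ghat F).plist (.vv ⟨ℓ, ⟨clen F ℓ, Nat.lt_succ_self _⟩⟩) =
        [.u ⟨ℓ, ⟨clen F ℓ, Nat.lt_succ_self _⟩⟩, .t] := by
      rcases ℓ with i | k
      · exact plist_vv_inl_last rfl
      · exact plist_vv_inr_last rfl
    obtain ⟨z, hz, h⟩ := hM.exists_pref_partner (Inst.adj_comm.1 (adj_u_vv _ _))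
      (by simp [hv]) ((prefOver_iff_of_eq_some hv).2 (pref_of_plist_eq_cons hl (by simp) (by simp)))
    rcases ℓ with i | k
    · have hl' := plist_u_inl_pos (j := ⟨clen F (Sum.inl i), Nat.lt_succ_self _⟩)
        (by simpa [clen] using (posClause_length_pos i).ne')
      exact hM.u_ne_pb _ _ (by rwa [eq_of_pref_of_plist_eq_pair hl' (by simp) h] at hz)
    · exact not_pref_of_plist_eq_cons (plist_u_inr_pos (by simp [clen])) h

lemma nd_eq_uAfterNeg (hM : (Ghat F).Stable M) {x : F.Var} {w : HGV F}
    (h : M (.nc x) = some w) (hw : w ≠ .nd x) (hw' : w ≠ .nd' x) :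
    M (.nd x) = some (uAfterNeg x) := by
  -- `c` prefers `d` to `w`, so `d` holds `c'` or `u`; but `c'` holds `d'`
  have hc' : M (.nc' x) = some (.nd' x) := by
    rcases hM.eq_some_or_exists_pref_of_plist_eq_cons (plist_nc' x) (by simp) with
      h' | ⟨z, hz, hp⟩
    · exact h'
    · rw [eq_of_pref_of_plist_eq_pair (plist_nd' x) (by simp) hp] at hz
      rw [hM.1.symm hz, Option.some_inj] at h
      exact absurd h.symm hw'
  have hwt : w ∈ (F.occsOfVar x).map .pb ++ [.nd' x, vBeforeNeg x] := by
    simpa [hw] using hM.1.mem_plist h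
  obtain ⟨z, hz, hp⟩ := hM.exists_pref_partner (u := .nc x) (v := .nd x) (by simp [Inst.adj])
    (by simpa [h] using hw) ((prefOver_iff_of_eq_some h).2
      (pref_of_plist_eq_cons (plist_nc x) hwt hw))
  have hz' := mem_of_pref_of_plist_eq_append (l₁ := [.nc' x, uAfterNeg x]) (plist_nd x)
    (by simp [uAfterNeg]) hp
  simp only [List.mem_cons, List.not_mem_nil, or_false] at hz'
  rcases hz' with rfl | rfl
  · rw [hM.1.symm hz] at hc'
    cases hc'
  · exact hz

lemma nc_partner_of_not_lt (hM : (Ghat F).Stable M) {x : F.Var} (hx : ¬ x.val < F.n)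
    {w : HGV F} (h : M (.nc x) = some w) : w = .nd x ∨ w = .nd' x := by
  by_contra hw
  push Not at hw
  have hd := hM.1.symm (hM.nd_eq_uAfterNeg h hw.1 hw.2)
  rw [uAfterNeg_of_not_lt hx] at hd
  -- the last `v` of the negative clause can only be matched to its `u`, which `d` holds
  obtain ⟨z, hz, hp⟩ := hM.exists_pref_partner
    (Inst.adj_comm.1 (adj_vv_t (Sum.inr (F.negIdx x)))) (by simp [hM.t_eq_none])
    (prefOver_of_eq_none hM.t_eq_none)
  rw [eq_of_pref_of_plist_eq_pair (plist_vv_inr_last rfl) (by simp) hp] at hz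
  cases (hM.1.symm hz).symm.trans hd

lemma nc_partner (hM : (Ghat F).Stable M) (x : F.Var) {w : HGV F} (h : M (.nc x) = some w) :
    w = .nd x ∨ w = .nd' x := by
  by_cases hx : x.val < F.n
  · by_contra hw
    push Not at hw
    have hd := hM.1.symm (hM.nd_eq_uAfterNeg h hw.1 hw.2)
    rw [uAfterNeg_of_lt hx] at hd
    -- `u_1` is held by `d`, so `v_1` must hold `c` of the second variable of the clause
    obtain ⟨z, hz, hp⟩ := hM.exists_pref_partner (adj_u_vv _ _) (by simp [hd])
      ((prefOver_iff_of_eq_some hd).2 (pref_of_plist_eq_cons (plist_u_inr_pos (by simp))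
        (by simp [varFst_negIdx hx]) (by simp)))
    rw [eq_of_pref_of_plist_eq_pair (plist_vv_inr_mid (by simp)) (by simp) hp] at hz
    rcases hM.nc_partner_of_not_lt (by simp [Formula.varSnd]) (hM.1.symm hz) with h' | h' <;>
      cases h'
  · exact hM.nc_partner_of_not_lt hx h

lemma negTrueH_or_negFalseH (hM : (Ghat F).Stable M) (x : F.Var) :
    NegTrueH M x ∨ NegFalseH M x := by
  rcases hM.eq_some_or_exists_pref_of_plist_eq_cons (plist_nc' x) (by simp) with
    hc' | ⟨z, hz, hp⟩
  · refine Or.inr ⟨?_, hc'⟩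
    rcases hM.eq_some_or_exists_pref_of_plist_eq_cons (plist_nd' x) (by simp) with
      h | ⟨z, hz, hp⟩
    · cases hM.1.eq_of_eq_some (hM.1.symm h) hc'
    · rcases hM.nc_partner x hz with rfl | rfl
      · exact hz
      · cases hM.1.eq_of_eq_some hz hc'
  · rw [eq_of_pref_of_plist_eq_pair (plist_nd' x) (by simp) hp] at hz
    refine Or.inl ⟨hM.1.symm hz, ?_⟩
    rcases hM.eq_some_or_exists_pref_of_plist_eq_cons (plist_nd x) (by simp) with
      h | ⟨z, hz', hp⟩
    · exact hM.1.symm h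
    · rw [eq_of_pref_of_plist_eq_pair (plist_nc' x) (by simp) hp] at hz'
      rw [hM.1.symm hz'] at hz
      cases hz

lemma posTrueH_or_posFalseH (hM : (Ghat F).Stable M) (o : F.Occ) :
    PosTrueH M o ∨ PosFalseH M o := by
  rcases hM.pb_partner o with hb | hb | hb
  · rcases hM.pb'_partner o with hb' | hb'
    · cases hM.1.eq_of_eq_some hb hb'
    · exact Or.inl ⟨hM.1.symm hb, hM.1.symm hb'⟩
  · rcases hM.pb'_partner o with hb' | hb'
    · exact Or.inr ⟨hM.1.symm hb', hM.1.symm hb⟩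
    · cases hM.1.eq_of_eq_some hb hb'
  · rcases hM.nc_partner _ (hM.1.symm hb) with h | h <;> cases h

lemma s_eq_none (hM : (Ghat F).Stable M) : M .s = none := by
  cases hs : M .s with
  | none => rfl
  | some w =>
    exfalso
    have hw := hM.1.mem_plist hs
    rw [plist_s, List.mem_map] at hw
    obtain ⟨ℓ, -, rfl⟩ := hw
    have hu := hM.1.symm hs
    have hl : (Ghat F).plist (.u ⟨ℓ, ⟨0, Nat.succ_pos _⟩⟩) =
        [.vv ⟨ℓ, ⟨0, Nat.succ_pos _⟩⟩, .s] := by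
      rcases ℓ with i | k
      · exact plist_u_inl_zero rfl
      · exact plist_u_inr_zero rfl
    obtain ⟨z, hz, hp⟩ := hM.exists_pref_partner (adj_u_vv _ _) (by rw [hu]; simp)
      ((prefOver_iff_of_eq_some hu).2 (pref_of_plist_eq_cons hl (by simp) (by simp)))
    rcases ℓ with i | k
    · exact not_pref_of_plist_eq_cons
        (plist_vv_inl_mid (by simpa [clen] using (posClause_length_pos i).ne)) hp
    · rw [eq_of_pref_of_plist_eq_pair (plist_vv_inr_mid (by simp)) (by simp) hp] at hz
      rcases hM.nc_partner _ (hM.1.symm hz) with h | h <;> cases h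

lemma u_partner (hM : (Ghat F).Stable M) {ℓ : CIdx F} {j : Fin (clen F ℓ + 1)} {z : HGV F}
    (h : M (.u ⟨ℓ, j⟩) = some z) : z = .vv ⟨ℓ, j⟩ := by
  have hz := hM.1.mem_plist h
  have hs : z ≠ .s := by rintro rfl; simpa [hM.s_eq_none] using hM.1.symm h
  rcases ℓ with i | k <;> by_cases hj : j.val = 0
  · simpa [plist_u_inl_zero hj, hs] using hz
  · rw [plist_u_inl_pos hj] at hz
    simp only [List.mem_cons, List.not_mem_nil, or_false] at hz
    exact hz.resolve_left (by rintro rfl; exact hM.u_ne_pb _ _ h)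
  · simpa [plist_u_inr_zero hj, hs] using hz
  · rw [plist_u_inr_pos hj] at hz
    simp only [List.mem_cons, List.not_mem_nil, or_false] at hz
    refine hz.resolve_right ?_
    rintro rfl
    rcases hM.negTrueH_or_negFalseH (if j.val = 1 then F.varFst k else F.varSnd k) with h' | h'
    · cases hM.1.eq_of_eq_some h h'.2
    · cases hM.1.eq_of_eq_some h h'.1

lemma u_eq_vv (hM : (Ghat F).Stable M) (ℓ : CIdx F) (j : Fin (clen F ℓ + 1)) :
    M (.u ⟨ℓ, j⟩) = some (.vv ⟨ℓ, j⟩) := by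
  cases hu : M (.u ⟨ℓ, j⟩) with
  | some z => rw [hM.u_partner hu]
  | none =>
    exfalso
    obtain ⟨z, hz, hp⟩ := hM.exists_pref_partner (adj_u_vv ℓ j) (by simp [hu])
      (prefOver_of_eq_none hu)
    rcases ℓ with i | k
    · by_cases hj : j.val = (F.posClause i).length
      · exact not_pref_of_plist_eq_cons (plist_vv_inl_last hj) hp
      · exact not_pref_of_plist_eq_cons (plist_vv_inl_mid hj) hp
    · by_cases hj : j.val = 2
      · exact not_pref_of_plist_eq_cons (plist_vv_inr_last hj) hp
      · rw [eq_of_pref_of_plist_eq_pair (plist_vv_inr_mid hj) (by simp) hp] at hz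
        rcases hM.nc_partner _ (hM.1.symm hz) with h | h <;> cases h

lemma posFalseH_of_negTrueH (hM : (Ghat F).Stable M) (o : F.Occ) (hN : NegTrueH M (F.litOf o)) :
    PosFalseH M o := by
  refine (hM.posTrueH_or_posFalseH o).resolve_left fun hT => ?_
  -- `b` and `c` would both rather be together than with `a` and `d'`
  refine hM.2 (.pb o) (.nc (F.litOf o)) ⟨by simp [Inst.adj, mem_occsOfVar], ?_, ?_, ?_⟩
  · rw [hM.1.symm hT.1]
    simp
  · rw [prefOver_iff_of_eq_some (hM.1.symm hT.1)]
    exact pref_of_plist_eq_append (l₁ := [.pa' o, .nc (F.litOf o)]) (plist_pb o) (by simp)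
      (by simp) (by simp)
  · rw [prefOver_iff_of_eq_some hN.1]
    exact pref_of_plist_eq_append (plist_nc _) (by simp [mem_occsOfVar]) (by simp) (by simp)

end Inst.Stable

section AugmentingPaths

variable {M : HGV F → Option (HGV F)}

/-- The position of a vertex along the path `s, u_0, v_0, …, u_r, v_r, t` of a clause, where the
gadget of the `j`-th literal is traversed between `v_{j-1}` and `u_j`. -/
def chainRank : HGV F → ℕ
  | .s => 0
  | .u ⟨_, j⟩ => 6 * j + 1
  | .vv ⟨_, j⟩ => 6 * j + 2
  | .pa o => 6 * o.1.2 + 3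
  | .pb' o => 6 * o.1.2 + 4
  | .pa' o => 6 * o.1.2 + 5
  | .pb o => 6 * o.1.2 + 6
  | .nc x => if x.val < F.n then 3 else 9
  | .nd x => if x.val < F.n then 4 else 10
  | .t => 24
  | .nc' _ | .nd' _ => 0

lemma gmAdj_s_u (hM : (Ghat F).Stable M) (ℓ : CIdx F) :
    (Ghat F).GMAdj M .s (.u ⟨ℓ, ⟨0, Nat.succ_pos _⟩⟩) :=
  ⟨adj_s_u ℓ, Or.inr (Or.inl (Inst.prefOver_of_eq_none hM.s_eq_none))⟩

lemma gmAdj_vv_t (hM : (Ghat F).Stable M) (ℓ : CIdx F) :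
    (Ghat F).GMAdj M (.vv ⟨ℓ, ⟨clen F ℓ, Nat.lt_succ_self _⟩⟩) .t :=
  ⟨adj_vv_t ℓ, Or.inr (Or.inr (Inst.prefOver_of_eq_none hM.t_eq_none))⟩

lemma gmAdj_vBefore_pa {o : F.Occ} (hF : PosFalseH M o) :
    (Ghat F).GMAdj M (vBefore o) (.pa o) := by
  refine ⟨⟨by simp [plist_vBefore], by simp⟩, Or.inr (Or.inr ?_)⟩
  rw [Inst.prefOver_iff_of_eq_some hF.1]
  exact Inst.pref_of_plist_eq_append (l₁ := [.pb o, vBefore o]) (plist_pa o) (by simp)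
    (by simp) (by simp [vBefore])

lemma gmAdj_pb'_pa' {o : F.Occ} (hF : PosFalseH M o) : (Ghat F).GMAdj M (.pb' o) (.pa' o) :=
  ⟨by simp [Inst.adj], Or.inr (Or.inr ((Inst.prefOver_iff_of_eq_some hF.2).2
    (Inst.pref_of_plist_eq_cons (plist_pa' o) (by simp) (by simp))))⟩

lemma gmAdj_pb_uAfter (hM : (Ghat F).Stable M) (o : F.Occ) :
    (Ghat F).GMAdj M (.pb o) (uAfter o) := by
  have hu := hM.u_eq_vv (Sum.inl o.1.1) ⟨o.1.2.val + 1, by have := o.2; simp only [clen]; omega⟩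
  refine ⟨⟨by simp, by simp [plist_uAfter]⟩, Or.inr (Or.inr ?_)⟩
  exact (Inst.prefOver_iff_of_eq_some hu).2
    (Inst.pref_of_plist_eq_cons (plist_uAfter o) (by simp) (by simp))

lemma gmAdj_vBeforeNeg_nc (hM : (Ghat F).Stable M) (x : F.Var) :
    (Ghat F).GMAdj M (vBeforeNeg x) (.nc x) := by
  have hv := hM.1.symm (hM.u_eq_vv (Sum.inr (F.negIdx x)) ⟨if x.val < F.n then 0 else 1, by
    have : clen F (Sum.inr (F.negIdx x)) = 2 := rfl
    rw [this]; split <;> omega⟩)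
  refine ⟨⟨by simp [plist_vBeforeNeg], by simp⟩, Or.inr (Or.inl ?_)⟩
  exact (Inst.prefOver_iff_of_eq_some hv).2
    (Inst.pref_of_plist_eq_cons (plist_vBeforeNeg x) (by simp) (by simp))

lemma gmAdj_nd_uAfterNeg (hM : (Ghat F).Stable M) {x : F.Var} (hF : NegFalseH M x) :
    (Ghat F).GMAdj M (.nd x) (uAfterNeg x) := by
  refine ⟨⟨by simp, by simp [plist_uAfterNeg]⟩, Or.inr (Or.inl ?_)⟩
  rw [Inst.prefOver_iff_of_eq_some (hM.1.symm hF.1)]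
  exact Inst.pref_of_plist_eq_append (l₁ := [.nc' x, uAfterNeg x]) (plist_nd x) (by simp)
    (by simp) (by simp [uAfterNeg])

/-- If both literals of a negative clause are false, then
`s, u_0, v_0, c_1, d_1, u_1, v_1, c_2, d_2, u_2, v_2, t` is an augmenting path. -/
lemma hasAugPath_of_negFalseH (hM : (Ghat F).Stable M) (k : Fin F.n)
    (h₁ : NegFalseH M (F.varFst k)) (h₂ : NegFalseH M (F.varSnd k)) :
    (Ghat F).HasAugPath M := by
  have hu (j : ℕ) (hj : j < 3) := hM.u_eq_vv (Sum.inr k) ⟨j, by simpa [clen] using hj⟩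
  refine Inst.hasAugPath_of_isChain hM.1 chainRank hM.s_eq_none hM.t_eq_none
    [(.u ⟨Sum.inr k, ⟨0, by simp [clen]⟩⟩, vBeforeNeg (F.varFst k)),
     (.nc (F.varFst k), .nd (F.varFst k)),
     (uAfterNeg (F.varFst k), vBeforeNeg (F.varSnd k)),
     (.nc (F.varSnd k), .nd (F.varSnd k)),
     (uAfterNeg (F.varSnd k), .vv ⟨Sum.inr k, ⟨2, by simp [clen]⟩⟩)] ?_ ?_
  · simp only [List.mem_cons, List.not_mem_nil, or_false, forall_eq_or_imp, forall_eq,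
      vBeforeNeg_varFst, uAfterNeg_varFst, vBeforeNeg_varSnd, uAfterNeg_varSnd]
    refine ⟨⟨hu 0 (by omega), ?_⟩, ⟨h₁.1, ?_⟩, ⟨hu 1 (by omega), ?_⟩, ⟨h₂.1, ?_⟩,
      ⟨hu 2 (by omega), ?_⟩⟩ <;>
      simp [chainRank, Formula.varFst, Formula.varSnd]
  · simp only [List.cons_append, List.nil_append, List.isChain_cons_cons, List.isChain_singleton,
      and_true, Inst.RankedLink]
    refine ⟨⟨gmAdj_s_u hM _, ?_⟩, ⟨gmAdj_vBeforeNeg_nc hM _, ?_⟩,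
      ⟨gmAdj_nd_uAfterNeg hM h₁, ?_⟩, ⟨gmAdj_vBeforeNeg_nc hM _, ?_⟩,
      ⟨gmAdj_nd_uAfterNeg hM h₂, ?_⟩, ⟨gmAdj_vv_t hM _, ?_⟩⟩ <;>
      simp only [vBeforeNeg_varFst, uAfterNeg_varFst, vBeforeNeg_varSnd, uAfterNeg_varSnd,
        chainRank] <;>
      simp [Formula.varFst, Formula.varSnd]

/-- The path of a false positive clause `i`, from `s` up to `u_j, v_j`. -/
lemma exists_isChain_posClause (hM : (Ghat F).Stable M) (i : Fin (F.m + F.n))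
    (hF : ∀ j (hj : j < (F.posClause i).length), PosFalseH M (mkOcc F i j hj)) :
    ∀ j (hj : j ≤ (F.posClause i).length), ∃ ps : List (HGV F × HGV F),
      (∀ q ∈ ps, M q.1 = some q.2 ∧ chainRank q.1 < chainRank q.2) ∧
      ((.s, .s) :: ps).IsChain ((Ghat F).RankedLink M chainRank) ∧
      ((.s, .s) :: ps).getLast? =
        some (.u ⟨Sum.inl i, ⟨j, by simp only [clen]; omega⟩⟩,
          .vv ⟨Sum.inl i, ⟨j, by simp only [clen]; omega⟩⟩) := by
  have hu (j : ℕ) (hj : j ≤ (F.posClause i).length) :=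
    hM.u_eq_vv (Sum.inl i) ⟨j, by simp only [clen]; omega⟩
  intro j hj
  induction j with
  | zero =>
    refine ⟨[(.u ⟨Sum.inl i, 0⟩, .vv ⟨Sum.inl i, 0⟩)], ?_, ?_, rfl⟩
    · simpa [chainRank] using hu 0 (by omega)
    · simpa [Inst.RankedLink, chainRank] using gmAdj_s_u hM (Sum.inl i)
  | succ j ih =>
    obtain ⟨ps, hps, hchain, hlast⟩ := ih (by omega)
    have hFj := hF j (by omega)
    set o := mkOcc F i j (by omega)
    have ho : o.1.2.val = j := rfl
    refine ⟨ps ++ [(.pa o, .pb' o), (.pa' o, .pb o),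
      (uAfter o, .vv ⟨Sum.inl i, ⟨j + 1, by simp only [clen]; omega⟩⟩)], ?_, ?_, ?_⟩
    · simp only [List.mem_append, List.mem_cons, List.not_mem_nil, or_false]
      rintro q (hq | rfl | rfl | rfl)
      · exact hps q hq
      · exact ⟨hFj.1, by simp [chainRank, ho]⟩
      · exact ⟨hFj.2, by simp [chainRank, ho]⟩
      · exact ⟨hu (j + 1) hj, by simp [chainRank, uAfter, ho]⟩
    · rw [← List.cons_append]
      refine hchain.append ?_ ?_
      · simp only [List.isChain_cons_cons, List.isChain_singleton, and_true, Inst.RankedLink]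
        exact ⟨⟨gmAdj_pb'_pa' hFj, by simp [chainRank]⟩,
          ⟨gmAdj_pb_uAfter hM o, by simp [chainRank, uAfter]; omega⟩⟩
      · simp only [hlast, Option.mem_def, Option.some.injEq, List.head?_cons, forall_eq']
        exact ⟨gmAdj_vBefore_pa hFj, by simp [chainRank, ho]⟩
    · rw [← List.cons_append, List.getLast?_append]
      rfl

/-- If all literals of a positive clause are false, then
`s, u_0, v_0, a_1, b'_1, a'_1, b_1, u_1, v_1, …, u_r, v_r, t` is an augmenting path. -/
lemma hasAugPath_of_posFalseH (hM : (Ghat F).Stable M) (i : Fin (F.m + F.n))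
    (hF : ∀ j (hj : j < (F.posClause i).length), PosFalseH M (mkOcc F i j hj)) :
    (Ghat F).HasAugPath M := by
  obtain ⟨ps, hps, hchain, hlast⟩ := exists_isChain_posClause hM i hF _ le_rfl
  refine Inst.hasAugPath_of_isChain hM.1 chainRank hM.s_eq_none hM.t_eq_none ps hps
    (hchain.append (List.isChain_singleton _) ?_)
  simp only [hlast, Option.mem_def, Option.some.injEq, List.head?_cons, forall_eq']
  exact ⟨gmAdj_vv_t hM _, by simp [chainRank]; have := F.posClause_length_le i; omega⟩

lemma asgnOfH_eq_true_iff {x : F.Var} : asgnOfH M x = true ↔ NegFalseH M x := by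
  simp [asgnOfH]

lemma litOf_mkOcc_mem (i : Fin (F.m + F.n)) (j : ℕ) (hj : j < (F.posClause i).length) :
    F.litOf (mkOcc F i j hj) ∈ F.posClause i :=
  List.get_mem _ _

theorem sat_asgnOfH_of_not_hasAugPath (hM : (Ghat F).Stable M)
    (hpath : ¬ (Ghat F).HasAugPath M) : F.Sat (asgnOfH M) := by
  refine ⟨fun i => ?_, fun k => ?_⟩
  · by_contra hcl
    push Not at hcl
    refine hpath (hasAugPath_of_posFalseH hM i fun j hj => hM.posFalseH_of_negTrueH _ ?_)
    refine (hM.negTrueH_or_negFalseH _).resolve_right fun hN => ?_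
    simpa [asgnOfH_eq_true_iff.2 hN] using hcl _ (litOf_mkOcc_mem i j hj)
  · by_contra hcl
    push Not at hcl
    simp only [ne_eq, Bool.not_eq_false, asgnOfH_eq_true_iff] at hcl
    exact hpath (hasAugPath_of_negFalseH hM k hcl.1 hcl.2)

end AugmentingPaths

section CertificateForMA

variable {A : F.Var → Bool}

lemma isMatching_MAH (A : F.Var → Bool) : (Ghat F).IsMatching (MAH F A) := by
  refine ⟨fun u v h => ?_, fun u v h => ?_⟩
  · cases u <;> simp only [MAH] at h <;> (try split at h) <;> cases h <;> simp [MAH, *]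
  · cases u <;> simp only [MAH] at h <;> (try split at h) <;> cases h
    all_goals first
      | exact adj_u_vv _ _
      | exact Inst.adj_comm.1 (adj_u_vv _ _)
      | simp [Inst.adj]

def HasTrueLitFrom (A : F.Var → Bool) (i : Fin (F.m + F.n)) (j : ℕ) : Prop :=
  ∃ x ∈ (F.posClause i).drop j, A x = true

lemma hasTrueLitFrom_zero (hA : F.Sat A) (i : Fin (F.m + F.n)) : HasTrueLitFrom A i 0 := by
  simpa [HasTrueLitFrom] using hA.1 i

lemma not_hasTrueLitFrom_length (i : Fin (F.m + F.n)) :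
    ¬ HasTrueLitFrom A i (F.posClause i).length := by
  simp [HasTrueLitFrom]

lemma hasTrueLitFrom_iff_of_lt {i : Fin (F.m + F.n)} {j : ℕ} (hj : j < (F.posClause i).length) :
    HasTrueLitFrom A i j ↔
      A (F.litOf (mkOcc F i j hj)) = true ∨ HasTrueLitFrom A i (j + 1) := by
  rw [HasTrueLitFrom, List.drop_eq_getElem_cons hj]
  simp only [List.mem_cons, exists_eq_or_imp]
  rfl

/-- The cover of `Inst.not_hasAugPath_of_cover` for `M_A`. Along the path of a positive clause it
takes the `u`-side up to the last true literal and the `v`-side after it. -/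
def InCover (A : F.Var → Bool) : HGV F → Prop
  | .s | .t => False
  | .u ⟨Sum.inl i, j⟩ => HasTrueLitFrom A i j
  | .vv ⟨Sum.inl i, j⟩ => ¬ HasTrueLitFrom A i j
  | .u ⟨Sum.inr k, j⟩ => j.val = 0 ∨ (j.val = 1 ∧ A (F.varSnd k) = false)
  | .vv ⟨Sum.inr k, j⟩ => j.val = 2 ∨ (j.val = 1 ∧ A (F.varSnd k) = true)
  | .pa o | .pa' o => A (F.litOf o) = false ∧ HasTrueLitFrom A o.1.1 (o.1.2 + 1)
  | .pb o | .pb' o => ¬ (A (F.litOf o) = false ∧ HasTrueLitFrom A o.1.1 (o.1.2 + 1))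
  | .nc x | .nc' x => x.val < F.n ∨ A x = false
  | .nd x | .nd' x => ¬ (x.val < F.n ∨ A x = false)

lemma MAH_ne_none_of_inCover {v : HGV F} (hv : InCover A v) : MAH F A v ≠ none := by
  cases v <;> simp [MAH, InCover] at hv ⊢ <;> split <;> simp

lemma not_inCover_of_MAH_eq_some {u v : HGV F} (h : MAH F A u = some v) (hu : InCover A u) :
    ¬ InCover A v := by
  cases u with
  | u q | vv q =>
    cases h
    obtain ⟨i | k, j⟩ := q <;> simp only [InCover] at hu ⊢ <;> grind
  | s | t => cases h
  | _ =>
    simp only [MAH] at h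
    split at h <;> cases h <;> simp_all [InCover]

lemma litOf_of_mem_occsOfVar {o : F.Occ} {x : F.Var} (h : o ∈ F.occsOfVar x) : F.litOf o = x := by
  simpa [Formula.occsOfVar] using (List.mem_filter.1 h).2

lemma inCover_of_gmAdj_t {v : HGV F} (h : (Ghat F).GMAdj (MAH F A) .t v) :
    InCover A .t ∨ InCover A v := by
  have hv := h.1.1
  rw [plist_t, List.mem_map] at hv
  obtain ⟨i | k, -, rfl⟩ := hv
  · exact Or.inr (not_hasTrueLitFrom_length i)
  · exact Or.inr (Or.inl rfl)

lemma MAH_nd_of_eq_false {x : F.Var} (hx : A x = false) : MAH F A (.nd x) = some (.nc' x) := by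
  simp [MAH, hx]

lemma inCover_of_gmAdj_u_inl (hA : F.Sat A) {i : Fin (F.m + F.n)}
    {j : Fin (clen F (Sum.inl i) + 1)} {v : HGV F}
    (h : (Ghat F).GMAdj (MAH F A) (.u ⟨Sum.inl i, j⟩) v)
    (hne : MAH F A (.u ⟨Sum.inl i, j⟩) ≠ some v) :
    InCover A (.u ⟨Sum.inl i, j⟩) ∨ InCover A v := by
  have hv := h.1.1
  by_cases hj : j.val = 0
  · rw [plist_u_inl_zero hj, List.mem_pair] at hv
    rcases hv with rfl | rfl
    · exact absurd rfl hne
    · left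
      simpa [InCover, hj] using hasTrueLitFrom_zero hA i
  · rw [plist_u_inl_pos hj, List.mem_pair] at hv
    rcases hv with rfl | rfl
    · by_cases ht : HasTrueLitFrom A i j
      · exact Or.inl ht
      · right
        simp only [InCover, mkOcc_snd_val, Nat.sub_add_cancel (Nat.pos_of_ne_zero hj)]
        exact fun h' => ht h'.2
    · exact absurd rfl hne

lemma not_gmAdj_u_nd {k : Fin F.n} {j : Fin (clen F (Sum.inr k) + 1)} (hj : j.val ≠ 0)
    (hy : A (if j.val = 1 then F.varFst k else F.varSnd k) = false) :
    ¬ (Ghat F).GMAdj (MAH F A) (.u ⟨Sum.inr k, j⟩)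
      (.nd (if j.val = 1 then F.varFst k else F.varSnd k)) :=
  Inst.not_gmAdj_of_plist_eq_cons (p := MAH F A) (u := .u ⟨Sum.inr k, j⟩) rfl
    (plist_u_inr_pos hj) (MAH_nd_of_eq_false hy) (plist_nd _) (by simp)

lemma inCover_of_gmAdj_u_inr (hA : F.Sat A) {k : Fin F.n} {j : Fin (clen F (Sum.inr k) + 1)}
    {v : HGV F} (h : (Ghat F).GMAdj (MAH F A) (.u ⟨Sum.inr k, j⟩) v)
    (hne : MAH F A (.u ⟨Sum.inr k, j⟩) ≠ some v) :
    InCover A (.u ⟨Sum.inr k, j⟩) ∨ InCover A v := by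
  have hv := h.1.1
  by_cases hj : j.val = 0
  · rw [plist_u_inr_zero hj, List.mem_pair] at hv
    rcases hv with rfl | rfl
    · exact absurd rfl hne
    · exact Or.inl (Or.inl hj)
  · rw [plist_u_inr_pos hj, List.mem_pair] at hv
    rcases hv with rfl | rfl
    · exact absurd rfl hne
    by_cases hj1 : j.val = 1
    · cases hs : A (F.varSnd k)
      · exact Or.inl (Or.inr ⟨hj1, hs⟩)
      · have hf : A (F.varFst k) = false := (hA.2 k).resolve_right (by simp [hs])
        exact absurd h (not_gmAdj_u_nd hj (by simpa [hj1] using hf))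
    · cases hs : A (F.varSnd k)
      · exact absurd h (not_gmAdj_u_nd hj (by simpa [hj1] using hs))
      · right
        simpa [InCover, hj1, Formula.varSnd] using hs

lemma inCover_of_gmAdj_pa {o : F.Occ} {v : HGV F} (h : (Ghat F).GMAdj (MAH F A) (.pa o) v) :
    InCover A (.pa o) ∨ InCover A v := by
  have hv := h.1.1
  simp only [plist_pa, List.mem_cons, List.not_mem_nil, or_false] at hv
  rcases hv with rfl | rfl | rfl
  · exact em _
  · by_cases ht : HasTrueLitFrom A o.1.1 o.1.2
    · cases hlit : A (F.litOf o)
      · exact Or.inl ⟨hlit, ((hasTrueLitFrom_iff_of_lt o.2).1 ht).resolve_left fun h' => by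
          rw [show mkOcc F o.1.1 o.1.2 o.2 = o from rfl, hlit] at h'
          cases h'⟩
      · refine absurd h (Inst.not_gmAdj_of_plist_eq_cons (p := MAH F A) ?_ (plist_pa o) rfl
          (plist_vBefore o) (by simp [vBefore]))
        simp [MAH, hlit]
    · exact Or.inr ht
  · exact em _

lemma inCover_of_gmAdj_pa' {o : F.Occ} {v : HGV F} (h : (Ghat F).GMAdj (MAH F A) (.pa' o) v) :
    InCover A (.pa' o) ∨ InCover A v := by
  have hv := h.1.1
  simp only [plist_pa', List.mem_cons, List.not_mem_nil, or_false] at hv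
  rcases hv with rfl | rfl <;> exact em _

lemma inCover_of_gmAdj_nc {x : F.Var} {v : HGV F} (h : (Ghat F).GMAdj (MAH F A) (.nc x) v) :
    InCover A (.nc x) ∨ InCover A v := by
  have hv := h.1.1
  simp only [plist_nc, List.mem_cons, List.mem_append, List.mem_map, List.not_mem_nil,
    or_false] at hv
  rcases hv with (rfl | ⟨o, ho, rfl⟩) | rfl | rfl
  · exact em _
  · refine (em (InCover A (.nc x))).imp_right fun hc hpa => hc (Or.inr ?_)
    rw [← litOf_of_mem_occsOfVar ho]
    exact hpa.1
  · exact em _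
  · by_cases hx : x.val < F.n
    · exact Or.inl (Or.inl hx)
    cases hAx : A x
    · exact Or.inl (Or.inr hAx)
    · right
      simp [vBeforeNeg, hx, InCover, varSnd_negIdx hx, hAx]

lemma inCover_of_gmAdj_nc' {x : F.Var} {v : HGV F} (h : (Ghat F).GMAdj (MAH F A) (.nc' x) v) :
    InCover A (.nc' x) ∨ InCover A v := by
  have hv := h.1.1
  simp only [plist_nc', List.mem_cons, List.not_mem_nil, or_false] at hv
  rcases hv with rfl | rfl <;> exact em _

lemma inCover_of_gmAdj (hA : F.Sat A) {u v : HGV F} (h : (Ghat F).GMAdj (MAH F A) u v)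
    (hne : MAH F A u ≠ some v) : InCover A u ∨ InCover A v := by
  have hM := isMatching_MAH (F := F) A
  wlog hu : u.side = true generalizing u v
  · have hv : v.side = true := by
      have := side_ne_of_mem_plist h.1.1
      simp_all
    exact (this (hM.gmAdj_comm.1 h) (fun e => hne (hM.symm e)) hv).symm
  cases u with
  | t => exact inCover_of_gmAdj_t h
  | u q =>
    obtain ⟨i | k, j⟩ := q
    exacts [inCover_of_gmAdj_u_inl hA h hne, inCover_of_gmAdj_u_inr hA h hne]
  | pa o => exact inCover_of_gmAdj_pa h
  | pa' o => exact inCover_of_gmAdj_pa' h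
  | nc x => exact inCover_of_gmAdj_nc h
  | nc' x => exact inCover_of_gmAdj_nc' h
  | _ => simp [HGV.side] at hu

theorem not_hasAugPath_MAH (hA : F.Sat A) : ¬ (Ghat F).HasAugPath (MAH F A) :=
  Inst.not_hasAugPath_of_cover {v | InCover A v} (fun _ hv => MAH_ne_none_of_inCover hv)
    (fun _ _ h hu => not_inCover_of_MAH_eq_some h hu) (fun _ _ h hne => inCover_of_gmAdj hA h hne)

end CertificateForMA

/-- If `M` is a stable matching of `Ĝ_φ` and `G_M` contains
no `M`-augmenting path, then the associated assignment `A_M` satisfies `φ`.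
Conversely, if `A` is a satisfying assignment of `φ`, then `G_{M_A}` contains
no `M_A`-augmenting path. -/
theorem Ghat_no_augpath_iff_satisfying (F : Formula) :
    (∀ p : HGV F → Option (HGV F), (Ghat F).Stable p →
      ¬ (Ghat F).HasAugPath p → F.Sat (asgnOfH p)) ∧
    (∀ A : F.Var → Bool, F.Sat A → ¬ (Ghat F).HasAugPath (MAH F A)) :=
  ⟨fun _ hM hpath => sat_asgnOfH_of_not_hasAugPath hM hpath, fun _ hA => not_hasAugPath_MAH hA⟩

end PopMatch
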